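/- arXiv:0911.3801 — 3 statements merged into one kernel-verified Lean document; each statement's English description precedes it below -/
import Mathlib

section
/- (Forward direction of the generalized Elfving theorem, algebraic core.) Let f_1, …, f_k : X → ℝ^p, let ξ have support x_1,…,x_m with weights p_r > 0, ∑ p_r = 1, and information matrix M = ∑_r p_r ∑_ℓ f_ℓ(x_r) f_ℓ(x_r)^T. Suppose d ∈ ℝ^p satisfies (i) ∑_ℓ (d^T f_ℓ(x))² ≤ 1 for all x ∈ X and (ii) ∑_ℓ (d^T f_ℓ(x_r))² = 1 for all r = 1,…,m. Set c = M d (assume c ≠ 0) and ε_{ℓ r} = d^T f_ℓ(x_r). Then ∑_ℓ ε_{ℓ r}² = 1 for all r, c = ∑_r p_r ∑_ℓ ε_{ℓ r} f_ℓ(x_r), and c lies on the boundary of the generalized Elfving set R_k = conv{ ∑_ℓ ε_ℓ f_ℓ(x) : x ∈ X, ‖ε‖ = 1 } (i.e., c ∈ R_k and d^T z ≤ 1 = d^T c for all z ∈ R_k). -/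
/-!
With `ε r ℓ = dᵀ f_ℓ(x_r)`, the vector `M d` is exactly `∑ r, p_r ∑ ℓ, ε r ℓ • f_ℓ(x_r)`, a convex
combination of generators of `R_k` whose coefficient vectors are unit by (ii), so `c ∈ R_k`, and
`dᵀ c = ∑ r, p_r ∑ ℓ, ε r ℓ ^ 2 = 1`. On a generator `∑ ℓ, e ℓ • f_ℓ(y)` with `‖e‖ = 1`,
Cauchy–Schwarz and (i) give `dᵀ z ≤ 1`; the half-space `dᵀ z ≤ 1` is convex, so it contains `R_k`.
-/

open Matrix Finset

section DotProduct

variable {R n ι κ : Type*} [Fintype n] [Fintype ι] [Fintype κ]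

theorem sum_smul_sum_vecMulVec_self_mulVec [CommSemiring R] (w : κ → R) (u : κ → ι → n → R)
    (d : n → R) :
    (∑ r, w r • ∑ ℓ, vecMulVec (u r ℓ) (u r ℓ)) *ᵥ d = ∑ r, w r • ∑ ℓ, (d ⬝ᵥ u r ℓ) • u r ℓ := by
  simp only [sum_mulVec, smul_mulVec, vecMulVec_mulVec, op_smul_eq_smul,
    dotProduct_comm]

theorem dotProduct_sum_smul_sum_dotProduct_smul [CommSemiring R] (w : κ → R) (u : κ → ι → n → R)
    (d : n → R) :
    d ⬝ᵥ ∑ r, w r • ∑ ℓ, (d ⬝ᵥ u r ℓ) • u r ℓ = ∑ r, w r * ∑ ℓ, (d ⬝ᵥ u r ℓ) ^ 2 := by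
  simp only [dotProduct_sum, dotProduct_smul, smul_eq_mul, sq]

theorem dotProduct_sum_smul_le_one [CommRing R] [LinearOrder R] [IsStrictOrderedRing R]
    {d : n → R} {g : ι → n → R} {e : ι → R} (he : ∑ ℓ, e ℓ ^ 2 = 1)
    (hg : ∑ ℓ, (d ⬝ᵥ g ℓ) ^ 2 ≤ 1) : d ⬝ᵥ ∑ ℓ, e ℓ • g ℓ ≤ 1 := by
  refine le_of_sq_le_sq ?_ zero_le_one
  calc (d ⬝ᵥ ∑ ℓ, e ℓ • g ℓ) ^ 2 = (∑ ℓ, e ℓ * (d ⬝ᵥ g ℓ)) ^ 2 := by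
        simp only [dotProduct_sum, dotProduct_smul, smul_eq_mul]
    _ ≤ (∑ ℓ, e ℓ ^ 2) * ∑ ℓ, (d ⬝ᵥ g ℓ) ^ 2 := sum_mul_sq_le_sq_mul_sq _ _ _
    _ ≤ 1 ^ 2 := by rw [he, one_mul, one_pow]; exact hg

end DotProduct

section ElfvingSet

variable {X n ι : Type*} [Fintype ι]

def elfvingSet (f : ι → X → n → ℝ) : Set (n → ℝ) :=
  convexHull ℝ {z | ∃ (y : X) (e : ι → ℝ), (∑ ℓ, e ℓ ^ 2 = 1) ∧ z = ∑ ℓ, e ℓ • f ℓ y}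

theorem sum_smul_mem_elfvingSet {κ : Type*} [Fintype κ] (f : ι → X → n → ℝ) (x : κ → X)
    {w : κ → ℝ} (hw : ∀ r, 0 ≤ w r) (hw1 : ∑ r, w r = 1) {ε : κ → ι → ℝ}
    (hε : ∀ r, ∑ ℓ, ε r ℓ ^ 2 = 1) : ∑ r, w r • ∑ ℓ, ε r ℓ • f ℓ (x r) ∈ elfvingSet f :=
  (convex_convexHull ℝ _).sum_mem (fun r _ => hw r) hw1 fun r _ =>
    subset_convexHull ℝ _ ⟨x r, ε r, hε r, rfl⟩

theorem dotProduct_le_one_of_mem_elfvingSet [Fintype n] {f : ι → X → n → ℝ} {d : n → ℝ}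
    (hd : ∀ y, ∑ ℓ, (d ⬝ᵥ f ℓ y) ^ 2 ≤ 1) {z : n → ℝ} (hz : z ∈ elfvingSet f) : d ⬝ᵥ z ≤ 1 := by
  refine convexHull_min ?_ (convex_halfSpace_le (dotProductBilin ℝ ℝ d).isLinear 1) hz
  rintro _ ⟨y, e, he, rfl⟩
  exact dotProduct_sum_smul_le_one he (hd y)

end ElfvingSet

theorem elfving_forward_direction_general
    {X : Type*} {p k m : ℕ}
    (f : Fin k → X → Fin p → ℝ) (x : Fin m → X) (w : Fin m → ℝ)
    (hw : ∀ r, 0 < w r) (hw1 : ∑ r, w r = 1)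
    (M : Matrix (Fin p) (Fin p) ℝ)
    (hM : M = ∑ r, w r • (∑ ℓ, vecMulVec (f ℓ (x r)) (f ℓ (x r))))
    (d : Fin p → ℝ)
    (hbd : ∀ y : X, ∑ ℓ, (d ⬝ᵥ f ℓ y) ^ 2 ≤ 1)
    (heq : ∀ r, ∑ ℓ, (d ⬝ᵥ f ℓ (x r)) ^ 2 = 1)
    (c : Fin p → ℝ) (hc : c = M *ᵥ d)
    (ε : Fin m → Fin k → ℝ) (hε : ∀ r ℓ, ε r ℓ = d ⬝ᵥ f ℓ (x r)) :
    (∀ r, ∑ ℓ, ε r ℓ ^ 2 = 1) ∧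
    c = ∑ r, w r • (∑ ℓ, ε r ℓ • f ℓ (x r)) ∧
    c ∈ convexHull ℝ {z : Fin p → ℝ |
        ∃ (y : X) (e : Fin k → ℝ), (∑ ℓ, e ℓ ^ 2 = 1) ∧
          z = ∑ ℓ, e ℓ • f ℓ y} ∧
    d ⬝ᵥ c = 1 ∧
    (∀ z ∈ convexHull ℝ {z : Fin p → ℝ |
        ∃ (y : X) (e : Fin k → ℝ), (∑ ℓ, e ℓ ^ 2 = 1) ∧
          z = ∑ ℓ, e ℓ • f ℓ y},
      d ⬝ᵥ z ≤ 1) := by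
  obtain rfl : ε = fun r ℓ => d ⬝ᵥ f ℓ (x r) := funext fun r => funext (hε r)
  have hc' : c = ∑ r, w r • ∑ ℓ, (d ⬝ᵥ f ℓ (x r)) • f ℓ (x r) := by
    rw [hc, hM, sum_smul_sum_vecMulVec_self_mulVec]
  refine ⟨heq, hc', ?_, ?_, fun z => dotProduct_le_one_of_mem_elfvingSet hbd⟩
  · rw [hc']
    exact sum_smul_mem_elfvingSet f x (fun r => (hw r).le) hw1 heq
  · simp only [hc', dotProduct_sum_smul_sum_dotProduct_smul, heq, mul_one, hw1]

theorem elfving_forward_direction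
    {X : Type*} [Nonempty X] {p k m : ℕ}
    (f : Fin k → X → Fin p → ℝ) (x : Fin m → X) (w : Fin m → ℝ)
    (hw : ∀ r, 0 < w r) (hw1 : ∑ r, w r = 1)
    (M : Matrix (Fin p) (Fin p) ℝ)
    (hM : M = ∑ r, w r • (∑ ℓ, vecMulVec (f ℓ (x r)) (f ℓ (x r))))
    (d : Fin p → ℝ)
    (hbd : ∀ y : X, ∑ ℓ, (d ⬝ᵥ f ℓ y) ^ 2 ≤ 1)
    (heq : ∀ r, ∑ ℓ, (d ⬝ᵥ f ℓ (x r)) ^ 2 = 1)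
    (c : Fin p → ℝ) (hc : c = M *ᵥ d) (hc0 : c ≠ 0)
    (ε : Fin m → Fin k → ℝ) (hε : ∀ r ℓ, ε r ℓ = d ⬝ᵥ f ℓ (x r)) :
    (∀ r, ∑ ℓ, ε r ℓ ^ 2 = 1) ∧
    c = ∑ r, w r • (∑ ℓ, ε r ℓ • f ℓ (x r)) ∧
    c ∈ convexHull ℝ {z : Fin p → ℝ |
        ∃ (y : X) (e : Fin k → ℝ), (∑ ℓ, e ℓ ^ 2 = 1) ∧
          z = ∑ ℓ, e ℓ • f ℓ y} ∧
    d ⬝ᵥ c = 1 ∧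
    (∀ z ∈ convexHull ℝ {z : Fin p → ℝ |
        ∃ (y : X) (e : Fin k → ℝ), (∑ ℓ, e ℓ ^ 2 = 1) ∧
          z = ∑ ℓ, e ℓ • f ℓ y},
      d ⬝ᵥ z ≤ 1) :=
  elfving_forward_direction_general f x w hw hw1 M hM d hbd heq c hc ε hε
end

section
/- (Converse direction, algebraic core.) Let f_1, …, f_k : X → ℝ^p, points x_1, …, x_m ∈ X, weights p_r > 0 with ∑ p_r = 1, and scalars ε_{ℓ r} with ∑_ℓ ε_{ℓ r}² = 1 for each r. Suppose c = ∑_r p_r ∑_ℓ ε_{ℓ r} f_ℓ(x_r) and there exists d ∈ ℝ^p with c^T d = 1 and |d^T ∑_ℓ ε_ℓ f_ℓ(x)| ≤ 1 for all x ∈ X and all unit vectors (ε_1,…,ε_k). Then: (a) ∑_ℓ (d^T f_ℓ(x))² ≤ 1 for all x ∈ X; (b) d^T ∑_ℓ ε_{ℓ r} f_ℓ(x_r) = 1 for each r; (c) ε_{ℓ r} = d^T f_ℓ(x_r) for all ℓ, r; and (d) c = M d where M = ∑_r p_r ∑_ℓ f_ℓ(x_r) f_ℓ(x_r)^T. -/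
open Matrix Finset

/-!
Write `a ℓ y = dᵀ f_ℓ(y)`. Testing the hypothesis on the unit vector `a(y)/‖a(y)‖` gives
`‖a(y)‖ ≤ 1`. Since `c` is a `w`-average of vectors `v_r` with `dᵀ v_r ≤ 1` while `dᵀ c = 1`,
every `dᵀ v_r = 1`; so the unit vector `ε_r` has inner product `1` with `a(x_r)`, which lies in
the unit ball, forcing `ε_r = a(x_r)`. Substituting this into `c` gives `c = M d`.
-/

section

variable {ι : Type*} [Fintype ι]

theorem sum_sq_le_one_of_forall_abs_sum_mul_le_one (a : ι → ℝ)
    (h : ∀ e : ι → ℝ, ∑ i, e i ^ 2 = 1 → |∑ i, e i * a i| ≤ 1) :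
    ∑ i, a i ^ 2 ≤ 1 := by
  by_contra! hgt
  set S := √(∑ i, a i ^ 2)
  have hS2 : S ^ 2 = ∑ i, a i ^ 2 := Real.sq_sqrt (by positivity)
  have hS : 1 < S := Real.lt_sqrt zero_le_one |>.mpr (by simpa using hgt)
  have hunit : ∑ i, (a i / S) ^ 2 = 1 := by
    simp only [div_pow, ← sum_div, ← hS2]
    exact div_self (by positivity)
  have hval : ∑ i, a i / S * a i = S := by
    simp only [div_mul_eq_mul_div, ← sum_div, ← sq, ← hS2]
    field_simp
  have := h _ hunit
  rw [hval, abs_of_pos (by positivity)] at this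
  linarith

theorem eq_of_sum_sq_eq_one_of_sum_mul_eq_one {e a : ι → ℝ} (he : ∑ i, e i ^ 2 = 1)
    (ha : ∑ i, a i ^ 2 ≤ 1) (hea : ∑ i, e i * a i = 1) : e = a := by
  have hexpand : ∑ i, (e i - a i) ^ 2 = ∑ i, e i ^ 2 - 2 * ∑ i, e i * a i + ∑ i, a i ^ 2 := by
    simp only [mul_sum, ← sum_sub_distrib, ← sum_add_distrib]
    exact sum_congr rfl fun i _ => by ring
  have hzero : ∑ i, (e i - a i) ^ 2 = 0 :=
    le_antisymm (by linarith) (sum_nonneg fun i _ => sq_nonneg _)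
  funext i
  have := (sum_eq_zero_iff_of_nonneg fun i _ => sq_nonneg (e i - a i)).mp hzero i (mem_univ i)
  exact sub_eq_zero.mp (pow_eq_zero_iff two_ne_zero |>.mp this)

theorem eq_one_of_sum_mul_eq_sum {w v : ι → ℝ} (hw : ∀ i, 0 < w i) (hv : ∀ i, v i ≤ 1)
    (h : ∑ i, w i * v i = ∑ i, w i) (i : ι) : v i = 1 := by
  have hle : ∀ j ∈ univ, w j * v j ≤ w j := fun j _ => mul_le_of_le_one_right (hw j).le (hv j)
  have := (sum_eq_sum_iff_of_le hle).mp h i (mem_univ i)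
  exact (mul_eq_left₀ (hw i).ne').mp this

end

theorem sum_vecMulVec_self_mulVec {ι n R : Type*} [Fintype n] [CommSemiring R] (s : Finset ι)
    (g : ι → n → R) (d : n → R) :
    (∑ i ∈ s, vecMulVec (g i) (g i)) *ᵥ d = ∑ i ∈ s, (d ⬝ᵥ g i) • g i := by
  simp only [sum_mulVec, vecMulVec_mulVec, op_smul_eq_smul, dotProduct_comm]

theorem elfving_converse_direction_general
    {X : Type*} {p k m : ℕ}
    (f : Fin k → X → Fin p → ℝ) (x : Fin m → X) (w : Fin m → ℝ)
    (hw : ∀ r, 0 < w r) (hw1 : ∑ r, w r = 1)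
    (ε : Fin m → Fin k → ℝ) (hε : ∀ r, ∑ ℓ, ε r ℓ ^ 2 = 1)
    (c : Fin p → ℝ)
    (hc : c = ∑ r, w r • (∑ ℓ, ε r ℓ • f ℓ (x r)))
    (d : Fin p → ℝ) (hcd : c ⬝ᵥ d = 1)
    (hsup : ∀ (y : X) (e : Fin k → ℝ), (∑ ℓ, e ℓ ^ 2 = 1) →
      |d ⬝ᵥ (∑ ℓ, e ℓ • f ℓ y)| ≤ 1) :
    (∀ y : X, ∑ ℓ, (d ⬝ᵥ f ℓ y) ^ 2 ≤ 1) ∧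
    (∀ r, d ⬝ᵥ (∑ ℓ, ε r ℓ • f ℓ (x r)) = 1) ∧
    (∀ r ℓ, ε r ℓ = d ⬝ᵥ f ℓ (x r)) ∧
    c = (∑ r, w r • (∑ ℓ, vecMulVec (f ℓ (x r)) (f ℓ (x r)))) *ᵥ d := by
  have hdot (y : X) (e : Fin k → ℝ) : d ⬝ᵥ (∑ ℓ, e ℓ • f ℓ y) = ∑ ℓ, e ℓ * (d ⬝ᵥ f ℓ y) := by
    simp only [dotProduct_sum, dotProduct_smul, smul_eq_mul]
  have hball (y : X) : ∑ ℓ, (d ⬝ᵥ f ℓ y) ^ 2 ≤ 1 :=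
    sum_sq_le_one_of_forall_abs_sum_mul_le_one _ fun e he => hdot y e ▸ hsup y e he
  have hsupport (r : Fin m) : d ⬝ᵥ (∑ ℓ, ε r ℓ • f ℓ (x r)) = 1 := by
    refine eq_one_of_sum_mul_eq_sum hw (fun r => (abs_le.mp (hsup _ _ (hε r))).2) ?_ r
    rw [hw1, ← hcd, hc, sum_dotProduct]
    simp only [smul_dotProduct, dotProduct_comm d, smul_eq_mul]
  have hweights (r : Fin m) : ε r = fun ℓ => d ⬝ᵥ f ℓ (x r) :=
    eq_of_sum_sq_eq_one_of_sum_mul_eq_one (hε r) (hball (x r)) (hdot _ _ ▸ hsupport r)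
  refine ⟨hball, hsupport, fun r ℓ => congrFun (hweights r) ℓ, ?_⟩
  rw [hc, sum_mulVec]
  simp only [smul_mulVec, sum_vecMulVec_self_mulVec, hweights]

theorem elfving_converse_direction
    {X : Type*} [Nonempty X] {p k m : ℕ}
    (f : Fin k → X → Fin p → ℝ) (x : Fin m → X) (w : Fin m → ℝ)
    (hw : ∀ r, 0 < w r) (hw1 : ∑ r, w r = 1)
    (ε : Fin m → Fin k → ℝ) (hε : ∀ r, ∑ ℓ, ε r ℓ ^ 2 = 1)
    (c : Fin p → ℝ)
    (hc : c = ∑ r, w r • (∑ ℓ, ε r ℓ • f ℓ (x r)))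
    (d : Fin p → ℝ) (hcd : c ⬝ᵥ d = 1)
    (hsup : ∀ (y : X) (e : Fin k → ℝ), (∑ ℓ, e ℓ ^ 2 = 1) →
      |d ⬝ᵥ (∑ ℓ, e ℓ • f ℓ y)| ≤ 1) :
    (∀ y : X, ∑ ℓ, (d ⬝ᵥ f ℓ y) ^ 2 ≤ 1) ∧
    (∀ r, d ⬝ᵥ (∑ ℓ, ε r ℓ • f ℓ (x r)) = 1) ∧
    (∀ r ℓ, ε r ℓ = d ⬝ᵥ f ℓ (x r)) ∧
    c = (∑ r, w r • (∑ ℓ, vecMulVec (f ℓ (x r)) (f ℓ (x r)))) *ᵥ d :=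
  elfving_converse_direction_general f x w hw hw1 ε hε c hc d hcd hsup
end

section
/- Let M be a symmetric positive semidefinite p×p matrix, c ∈ Range(M), and suppose d ∈ ℝ^p satisfies M d = c, c^T d = 1, and ∑_ℓ (d^T f_ℓ(x))² ≤ 1 for all x ∈ X, where M = ∑_r p_r ∑_ℓ f_ℓ(x_r) f_ℓ(x_r)^T is the information matrix of a design ξ. Then for every design η on X with finitely many support points and information matrix M(η), and every u with M(η) u = c, one has c^T u ≥ 1 = c^T d. That is, ξ minimizes c^T M(η)^- c over all designs for which c is estimable. -/
/-!
Write `N = M(η)`. From `N u = c` we get `dᵀ N u = cᵀ d = 1` and `uᵀ N u = cᵀ u`, while the bound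
on `d` gives `dᵀ N d = ∑ₛ qₛ ∑ₗ (dᵀ fₗ(yₛ))² ≤ 1`. Since `N` is positive semidefinite,
Cauchy–Schwarz for the form `(v, w) ↦ vᵀ N w` yields `1 ≤ (dᵀ N d)(uᵀ N u) ≤ cᵀ u`.
-/

open Matrix

namespace Matrix.PosSemidef

variable {n R : Type*} [Fintype n] [CommRing R] [LinearOrder R] [IsStrictOrderedRing R]
  [StarRing R] [TrivialStar R]

theorem dotProduct_mulVec_sq_le {N : Matrix n n R} (hN : N.PosSemidef) (v u : n → R) :
    (v ⬝ᵥ N *ᵥ u) ^ 2 ≤ (v ⬝ᵥ N *ᵥ v) * (u ⬝ᵥ N *ᵥ u) := by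
  classical
  have hT : Nᵀ = N := isHermitian_iff_isSymm.mp hN.isHermitian
  have hsymm : LinearMap.IsSymm (toBilin' N) := ⟨fun a b => by
    rw [toBilin'_apply', toBilin'_apply', RingHom.id_apply, dotProduct_mulVec, ← hT,
      vecMul_transpose, dotProduct_comm, hT]⟩
  have hnonneg (x : n → R) : 0 ≤ toBilin' N x x := by
    simpa [toBilin'_apply'] using hN.dotProduct_mulVec_nonneg x
  simpa only [toBilin'_apply'] using (toBilin' N).apply_sq_le_of_symm hnonneg hsymm v u

end Matrix.PosSemidef

section InformationMatrix

variable {X ι σ n : Type*} [Fintype ι] [Fintype σ] [Fintype n]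

def infoMatrix (f : ι → X → n → ℝ) (y : σ → X) (q : σ → ℝ) : Matrix n n ℝ :=
  ∑ s, q s • ∑ ℓ, vecMulVec (f ℓ (y s)) (f ℓ (y s))

theorem posSemidef_infoMatrix (f : ι → X → n → ℝ) (y : σ → X) {q : σ → ℝ}
    (hq : ∀ s, 0 ≤ q s) : (infoMatrix f y q).PosSemidef :=
  posSemidef_sum _ fun s _ => .smul (posSemidef_sum _ fun ℓ _ => by
    simpa using posSemidef_vecMulVec_self_star (f ℓ (y s))) (hq s)

theorem dotProduct_infoMatrix_mulVec_self (f : ι → X → n → ℝ) (y : σ → X) (q : σ → ℝ)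
    (v : n → ℝ) :
    v ⬝ᵥ infoMatrix f y q *ᵥ v = ∑ s, q s * ∑ ℓ, (v ⬝ᵥ f ℓ (y s)) ^ 2 := by
  simp only [infoMatrix, sum_mulVec, smul_mulVec, vecMulVec_mulVec, dotProduct_sum,
    dotProduct_smul, op_smul_eq_smul, smul_eq_mul, dotProduct_comm _ v, sq]

end InformationMatrix

theorem c_optimality_sufficiency_general
    {X : Type*} {p k : ℕ}
    (f : Fin k → X → Fin p → ℝ)
    (c d : Fin p → ℝ)
    (hcd : c ⬝ᵥ d = 1)
    (hbd : ∀ y : X, ∑ ℓ, (d ⬝ᵥ f ℓ y) ^ 2 ≤ 1) :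
    ∀ (n : ℕ) (y : Fin n → X) (q : Fin n → ℝ),
      (∀ s, 0 ≤ q s) → (∑ s, q s = 1) →
      ∀ u : Fin p → ℝ,
        (∑ s, q s • (∑ ℓ, vecMulVec (f ℓ (y s)) (f ℓ (y s)))) *ᵥ u = c →
        1 ≤ c ⬝ᵥ u := by
  intro n y q hq hq1 u hNu
  change infoMatrix f y q *ᵥ u = c at hNu
  have hN := posSemidef_infoMatrix f y hq
  have hdd : d ⬝ᵥ infoMatrix f y q *ᵥ d ≤ 1 :=
    calc d ⬝ᵥ infoMatrix f y q *ᵥ d = ∑ s, q s * ∑ ℓ, (d ⬝ᵥ f ℓ (y s)) ^ 2 :=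
          dotProduct_infoMatrix_mulVec_self f y q d
      _ ≤ ∑ s, q s * 1 := by gcongr with s; exacts [hq s, hbd (y s)]
      _ = 1 := by simp [hq1]
  have huu : u ⬝ᵥ infoMatrix f y q *ᵥ u = c ⬝ᵥ u := by rw [hNu, dotProduct_comm]
  have huu_nonneg : 0 ≤ u ⬝ᵥ infoMatrix f y q *ᵥ u := by
    simpa using hN.dotProduct_mulVec_nonneg u
  calc (1 : ℝ) = (d ⬝ᵥ infoMatrix f y q *ᵥ u) ^ 2 := by rw [hNu, dotProduct_comm, hcd, one_pow]
    _ ≤ (d ⬝ᵥ infoMatrix f y q *ᵥ d) * (u ⬝ᵥ infoMatrix f y q *ᵥ u) :=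
      hN.dotProduct_mulVec_sq_le d u
    _ ≤ c ⬝ᵥ u := by rw [← huu]; exact mul_le_of_le_one_left huu_nonneg hdd

theorem c_optimality_sufficiency
    {X : Type*} [Nonempty X] {p k m : ℕ}
    (f : Fin k → X → Fin p → ℝ) (x : Fin m → X) (w : Fin m → ℝ)
    (hw : ∀ r, 0 < w r) (hw1 : ∑ r, w r = 1)
    (M : Matrix (Fin p) (Fin p) ℝ)
    (hM : M = ∑ r, w r • (∑ ℓ, vecMulVec (f ℓ (x r)) (f ℓ (x r))))
    (c d : Fin p → ℝ)
    (hMd : M *ᵥ d = c) (hcd : c ⬝ᵥ d = 1)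
    (hbd : ∀ y : X, ∑ ℓ, (d ⬝ᵥ f ℓ y) ^ 2 ≤ 1) :
    ∀ (n : ℕ) (y : Fin n → X) (q : Fin n → ℝ),
      (∀ s, 0 ≤ q s) → (∑ s, q s = 1) →
      ∀ u : Fin p → ℝ,
        (∑ s, q s • (∑ ℓ, vecMulVec (f ℓ (y s)) (f ℓ (y s)))) *ᵥ u = c →
        1 ≤ c ⬝ᵥ u :=
  c_optimality_sufficiency_general f c d hcd hbd
end
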